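/- For p = 5/6, one has f_p(5, 1) = 3125/1296 and f_p(4, 2) = 139/81; in particular f_p(4, 2) < f_p(5, 1), so the initial assignment (5,1), which is proportional to the selection probabilities (5/6, 1/6), does not minimize the expected number of remaining balls among two-bin assignments of 6 balls. -/
import Mathlib


namespace BallsBins

/-- `fp p a b` is the expected number of balls remaining in the two-bin removal process
started from the assignment `(a, b)`, in which at each round bin 1 is selected with
probability `p` and bin 2 with probability `1 - p`:
`fp p (a, 0) = a`, `fp p (0, b) = b`, and
`fp p (a, b) = p · fp p (a-1, b) + (1-p) · fp p (a, b-1)` for `a, b ≥ 1`. -/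
noncomputable def fp (p : ℝ) : ℕ → ℕ → ℝ
  | a, 0 => a
  | 0, b => b
  | a + 1, b + 1 => p * fp p a (b + 1) + (1 - p) * fp p (a + 1) b

/-- For `p = 5/6`: `fp p (5, 1) = 3125/1296`, `fp p (4, 2) = 139/81`, and in
particular `fp p (4, 2) < fp p (5, 1)`, so the proportional assignment `(5, 1)` does not
minimize the expected number of remaining balls among two-bin assignments of 6 balls:
some other assignment `(n₁, n₂)` with `n₁ + n₂ = 6` has a strictly smaller value. -/
theorem proportional_not_optimal :
    fp (5 / 6) 5 1 = 3125 / 1296 ∧ fp (5 / 6) 4 2 = 139 / 81 ∧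
      fp (5 / 6) 4 2 < fp (5 / 6) 5 1 ∧
      ∃ n₁ n₂ : ℕ, n₁ + n₂ = 6 ∧ fp (5 / 6) n₁ n₂ < fp (5 / 6) 5 1 := by
  have h51 : fp (5 / 6) 5 1 = 3125 / 1296 := by norm_num [fp]
  have h42 : fp (5 / 6) 4 2 = 139 / 81 := by norm_num [fp]
  refine ⟨h51, h42, ?_, 4, 2, by norm_num, ?_⟩ <;> rw [h51, h42] <;> norm_num

end BallsBins
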